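/- In single-decree Paxos with acceptor state (min_proposal, accepted_proposal, accepted_value), if a value v is chosen with proposal number n (i.e., a majority of acceptors have accepted (n, v)), then any acceptor state reachable afterwards satisfies: any proposal n' > n that gets accepted by a majority must carry value v. Consequently, uniform agreement holds: if values v and v' are both decided, then v = v'. -/

import Mathlib

/-! The proof is the classical safety argument, by strong induction on the higher proposal
number `n'`. The proposer of `n'` collected promises from a quorum, which meets the quorum
that accepted `(n, v)` in some acceptor `b`. Having promised `n' > n`, `b` could not accept
`n` afterwards, so it had accepted `n` before its promise and reported an accepted proposal
numbered at least `n`. Hence the proposer adopted a value that was accepted under some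
proposal `m` with `n ≤ m < n'`, and that value is `v`: for `m = n` because each proposal
number carries a single value, for `m > n` by induction. -/

/-- State of a Paxos acceptor. -/
structure AccState (V : Type) where
  minP : ℕ
  accP : ℕ
  accV : Option V

/-- Events at acceptors: a (promised) Prepare, or a successful Accept. -/
inductive Ev (A V : Type) : Type
  | prepare (a : A) (n : ℕ)
  | accept (a : A) (n : ℕ) (v : V)

/-- Effect of an event on the state of acceptor `a`. -/
def stepAcc {A V : Type} [DecidableEq A] (a : A) (s : AccState V) : Ev A V → AccState V
  | .prepare a' n => if a' = a then { s with minP := max s.minP n } else s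
  | .accept a' n v => if a' = a ∧ s.minP ≤ n then ⟨n, n, some v⟩ else s

/-- State of acceptor `a` after processing the history `h` (initially `(0,0,⊥)`). -/
def accStateAfter {A V : Type} [DecidableEq A] (h : List (Ev A V)) (a : A) : AccState V :=
  h.foldl (stepAcc a) ⟨0, 0, none⟩

/-- A quorum is a majority of the acceptors. -/
def Quorum {A : Type} [Fintype A] (Q : Finset A) : Prop :=
  Fintype.card A < 2 * Q.card

/-- Well-formed Paxos histories: every accept event `accept a n v` at position `i`
satisfies: (1) it succeeds, i.e. `n ≥` the acceptor's `min_proposal` at that point;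
(2) all accepts with proposal number `n` carry the same value (proposal numbers are
owned by a single proposer); (3) the proposer of `n` first got acknowledged Prepare
responses from a quorum `Q` (each acceptor `b ∈ Q` had `min_proposal < n` at the time
`t b` of its prepare), and `v` is either the proposer's own input (in `Proposed`) if
no acceptor of `Q` had accepted a value, or the accepted value with the highest
accepted proposal among the responses. -/
def WF {A V : Type} [Fintype A] [DecidableEq A] (Proposed : Set V)
    (h : List (Ev A V)) : Prop :=
  ∀ i a n v, h[i]? = some (.accept a n v) →
    (accStateAfter (h.take i) a).minP ≤ n ∧
    (∀ j a' v', h[(j : ℕ)]? = some (.accept a' n v') → v' = v) ∧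
    (∃ Q : Finset A, Quorum Q ∧ ∃ t : A → ℕ,
      (∀ b ∈ Q, t b < i ∧ h[t b]? = some (.prepare b n) ∧
        (accStateAfter (h.take (t b)) b).minP < n) ∧
      (((∀ b ∈ Q, (accStateAfter (h.take (t b)) b).accV = none) ∧ v ∈ Proposed) ∨
       (∃ b0 ∈ Q, (accStateAfter (h.take (t b0)) b0).accV = some v ∧
         ∀ b ∈ Q,
           (accStateAfter (h.take (t b)) b).accP
             ≤ (accStateAfter (h.take (t b0)) b0).accP)))

/-- `v` is chosen (decided) with proposal number `n`: a quorum of acceptors has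
accepted `(n, v)`. -/
def Chosen {A V : Type} [Fintype A] [DecidableEq A] (h : List (Ev A V)) (n : ℕ)
    (v : V) : Prop :=
  ∃ Q : Finset A, Quorum Q ∧ ∀ a ∈ Q, ∃ i, h[(i : ℕ)]? = some (Ev.accept a n v)

namespace AccState

variable {V : Type}

structure Precedes (s t : AccState V) : Prop where
  minP_le : s.minP ≤ t.minP
  accP_le : s.accP ≤ t.accP
  isSome_accV : s.accV.isSome → t.accV.isSome

theorem Precedes.refl (s : AccState V) : s.Precedes s :=
  ⟨le_rfl, le_rfl, id⟩

theorem Precedes.trans {s t u : AccState V} (hst : s.Precedes t) (htu : t.Precedes u) :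
    s.Precedes u :=
  ⟨hst.minP_le.trans htu.minP_le, hst.accP_le.trans htu.accP_le,
    htu.isSome_accV ∘ hst.isSome_accV⟩

end AccState

section Acceptor

variable {A V : Type} [DecidableEq A]

theorem accP_le_minP_stepAcc (a : A) {s : AccState V} (hs : s.accP ≤ s.minP) (e : Ev A V) :
    (stepAcc a s e).accP ≤ (stepAcc a s e).minP := by
  cases e <;> simp only [stepAcc] <;> split_ifs <;> grind

theorem precedes_stepAcc (a : A) {s : AccState V} (hs : s.accP ≤ s.minP) (e : Ev A V) :
    s.Precedes (stepAcc a s e) := by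
  cases e <;> simp only [stepAcc] <;> split_ifs <;> first | exact .refl s | constructor <;> grind

theorem accP_le_minP_foldl_stepAcc (a : A) {s : AccState V} (hs : s.accP ≤ s.minP)
    (l : List (Ev A V)) :
    (l.foldl (stepAcc a) s).accP ≤ (l.foldl (stepAcc a) s).minP := by
  induction l generalizing s with
  | nil => exact hs
  | cons e l ih => exact ih (accP_le_minP_stepAcc a hs e)

theorem precedes_foldl_stepAcc (a : A) {s : AccState V} (hs : s.accP ≤ s.minP)
    (l : List (Ev A V)) : s.Precedes (l.foldl (stepAcc a) s) := by
  induction l generalizing s with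
  | nil => exact .refl s
  | cons e l ih =>
    exact (precedes_stepAcc a hs e).trans (ih (accP_le_minP_stepAcc a hs e))

theorem accP_le_minP_accStateAfter (l : List (Ev A V)) (a : A) :
    (accStateAfter l a).accP ≤ (accStateAfter l a).minP :=
  accP_le_minP_foldl_stepAcc a le_rfl l

theorem accStateAfter_append_singleton (l : List (Ev A V)) (e : Ev A V) (a : A) :
    accStateAfter (l ++ [e]) a = stepAcc a (accStateAfter l a) e := by
  simp [accStateAfter]

theorem exists_accept_of_accV_eq_some {l : List (Ev A V)} {a : A} {w : V}
    (hw : (accStateAfter l a).accV = some w) :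
    ∃ k : ℕ, l[k]? = some (Ev.accept a (accStateAfter l a).accP w) := by
  induction l using List.reverseRecOn with
  | nil => simp [accStateAfter] at hw
  | append_singleton l e ih =>
    rw [accStateAfter_append_singleton] at hw ⊢
    have lift : ∀ {x}, (∃ k : ℕ, l[k]? = some x) → ∃ k : ℕ, (l ++ [e])[k]? = some x :=
      fun ⟨k, hk⟩ =>
        ⟨k, by rw [List.getElem?_append_left (List.getElem?_eq_some_iff.1 hk).1, hk]⟩
    cases e with
    | prepare a' m =>
      simp only [stepAcc] at hw ⊢
      split_ifs at hw ⊢ <;> exact lift (ih hw)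
    | accept a' m u =>
      simp only [stepAcc] at hw ⊢
      split_ifs at hw ⊢ with hc
      · obtain ⟨rfl, -⟩ := hc
        cases hw
        exact ⟨l.length, List.getElem?_concat_length⟩
      · exact lift (ih hw)

variable {h : List (Ev A V)} {i j : ℕ}

theorem accStateAfter_take_succ {e : Ev A V} (he : h[i]? = some e) (a : A) :
    accStateAfter (h.take (i + 1)) a = stepAcc a (accStateAfter (h.take i) a) e := by
  rw [List.take_add_one, he, Option.toList_some, accStateAfter_append_singleton]

theorem precedes_accStateAfter_take (hij : i ≤ j) (a : A) :
    (accStateAfter (h.take i) a).Precedes (accStateAfter (h.take j) a) := by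
  obtain ⟨l, hl⟩ := List.take_prefix_take_left (l := h) hij
  rw [← hl, accStateAfter, accStateAfter, List.foldl_append]
  exact precedes_foldl_stepAcc a (accP_le_minP_accStateAfter _ a) l

def Accepted (h : List (Ev A V)) (n : ℕ) (v : V) : Prop :=
  ∃ i a, h[(i : ℕ)]? = some (Ev.accept a n v)

theorem accepted_of_accV_eq_some {a : A} {w : V}
    (hw : (accStateAfter (h.take j) a).accV = some w) :
    Accepted h (accStateAfter (h.take j) a).accP w := by
  obtain ⟨k, hk⟩ := exists_accept_of_accV_eq_some hw
  rw [List.getElem?_take] at hk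
  split_ifs at hk
  exact ⟨k, a, hk⟩

end Acceptor

section Quorum

variable {A : Type} [Fintype A] [DecidableEq A] {Q Q' : Finset A}

theorem Quorum.inter_nonempty (hQ : Quorum Q) (hQ' : Quorum Q') : (Q ∩ Q').Nonempty :=
  Finset.inter_nonempty_of_card_lt_card_add_card (Finset.subset_univ Q)
    (Finset.subset_univ Q') (by unfold Quorum at hQ hQ'; rw [Finset.card_univ]; omega)

theorem Quorum.nonempty (hQ : Quorum Q) : Q.Nonempty := by
  simpa using hQ.inter_nonempty hQ

end Quorum

section Protocol

variable {A V : Type} [Fintype A] [DecidableEq A] {Proposed : Set V} {h : List (Ev A V)}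
  {a b : A} {n n' : ℕ} {v v' : V}

theorem Chosen.accepted (hch : Chosen h n v) : Accepted h n v := by
  obtain ⟨Q, hQ, hacc⟩ := hch
  obtain ⟨a, ha⟩ := hQ.nonempty
  obtain ⟨i, hi⟩ := hacc a ha
  exact ⟨i, a, hi⟩

theorem WF.eq_of_accepted (hwf : WF Proposed h) (hv : Accepted h n v)
    (hv' : Accepted h n v') : v' = v := by
  obtain ⟨i, a, hi⟩ := hv
  obtain ⟨j, a', hj⟩ := hv'
  exact (hwf i a n v hi).2.1 j a' v' hj

theorem WF.le_of_prepare_of_accept (hwf : WF Proposed h) {t i : ℕ}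
    (hprep : h[t]? = some (Ev.prepare b n')) (hacc : h[i]? = some (Ev.accept b n v))
    (hti : t ≤ i) : n' ≤ n := by
  obtain rfl | hlt := hti.eq_or_lt
  · simp [hprep] at hacc
  calc n' ≤ (accStateAfter (h.take (t + 1)) b).minP := by
        simp [accStateAfter_take_succ hprep, stepAcc]
    _ ≤ (accStateAfter (h.take i) b).minP := (precedes_accStateAfter_take hlt b).minP_le
    _ ≤ n := (hwf i b n v hacc).1

theorem WF.le_accP_and_accV_isSome_of_accept (hwf : WF Proposed h) {i t : ℕ}
    (hacc : h[i]? = some (Ev.accept b n v)) (hit : i < t) :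
    n ≤ (accStateAfter (h.take t) b).accP ∧ (accStateAfter (h.take t) b).accV.isSome := by
  have hafter : accStateAfter (h.take (i + 1)) b = ⟨n, n, some v⟩ := by
    simp [accStateAfter_take_succ hacc, stepAcc, (hwf i b n v hacc).1]
  have hprec := precedes_accStateAfter_take (h := h) hit b
  rw [hafter] at hprec
  exact ⟨hprec.accP_le, hprec.isSome_accV rfl⟩

theorem WF.exists_accepted_between (hwf : WF Proposed h) (hch : Chosen h n v) (hn : n < n')
    {i : ℕ} (hi : h[i]? = some (Ev.accept a n' v')) :
    ∃ m, n ≤ m ∧ m < n' ∧ Accepted h m v' := by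
  obtain ⟨-, -, Q, hQ, t, hprep, hsel⟩ := hwf i a n' v' hi
  obtain ⟨Qc, hQc, hacc⟩ := hch
  obtain ⟨b, hb⟩ := hQ.inter_nonempty hQc
  obtain ⟨hbQ, hbQc⟩ := Finset.mem_inter.1 hb
  obtain ⟨ib, hib⟩ := hacc b hbQc
  have hib_lt : ib < t b := lt_of_not_ge fun hle =>
    hn.not_ge (hwf.le_of_prepare_of_accept (hprep b hbQ).2.1 hib hle)
  obtain ⟨hnb, hsome⟩ := hwf.le_accP_and_accV_isSome_of_accept hib hib_lt
  rcases hsel with ⟨hnone, -⟩ | ⟨b0, hb0, hv', hmax⟩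
  · simp [hnone b hbQ] at hsome
  · exact ⟨_, hnb.trans (hmax b hbQ),
      (accP_le_minP_accStateAfter _ b0).trans_lt (hprep b0 hb0).2.2,
      accepted_of_accV_eq_some hv'⟩

theorem WF.eq_of_chosen_of_accepted (hwf : WF Proposed h) (hch : Chosen h n v) (hn : n < n')
    (hv' : Accepted h n' v') : v' = v := by
  induction n' using Nat.strong_induction_on generalizing v' with
  | _ n' ih =>
    obtain ⟨i, a, hi⟩ := hv'
    obtain ⟨m, hnm, hmn', hm⟩ := hwf.exists_accepted_between hch hn hi
    obtain rfl | hlt := hnm.eq_or_lt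
    · exact hwf.eq_of_accepted hch.accepted hm
    · exact ih m hmn' hlt hm

end Protocol

/-- If a value `v` is chosen with proposal number `n`, then any higher-numbered
proposal `n' > n` accepted by a majority must carry value `v`. Consequently, uniform
agreement holds: any two decided values are equal. -/
theorem paxos_agreement {A V : Type} [Fintype A] [DecidableEq A] :
    ∀ (Proposed : Set V) (h : List (Ev A V)) (n : ℕ) (v : V),
      WF Proposed h → Chosen h n v →
      (∀ n' v', n < n' → Chosen h n' v' → v' = v) ∧
      (∀ n' v', Chosen h n' v' → v' = v) := by
  intro Proposed h n v hwf hch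
  have higher : ∀ n' v', n < n' → Chosen h n' v' → v' = v := fun n' v' hn hch' =>
    hwf.eq_of_chosen_of_accepted hch hn hch'.accepted
  refine ⟨higher, fun n' v' hch' => ?_⟩
  rcases lt_trichotomy n n' with hlt | rfl | hlt
  · exact higher n' v' hlt hch'
  · exact hwf.eq_of_accepted hch.accepted hch'.accepted
  · exact (hwf.eq_of_chosen_of_accepted hch' hlt hch.accepted).symm
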